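/- arXiv:2508.03901 — 3 statements merged into one kernel-verified Lean document; each statement's English description precedes it below -/
import Mathlib

section
/- For the two-level (bi-fidelity) Monte Carlo estimator \hat{F} = \bar{F}^0_{n} + c(\bar{F}^1_{m} - \bar{F}^1_{n}) with n < m, where the first n samples of F^1 are coupled with the n samples of F^0 (common random numbers) and the remaining samples are independent, the variance equals \sigma_0^2/n + (1/n - 1/m)(c^2 \sigma_1^2 - 2c\,\sigma_{01}). -/
open MeasureTheory ProbabilityTheory

/-!
Split the estimator into one summand per sample index `j < m`, namely `a j • F⁰ⱼ + b j • F¹ⱼ`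
with `a j = 1/n, b j = c (1/m - 1/n)` for `j < n` and `a j = 0, b j = c/m` for `n ≤ j`.
Samples with different indices are uncorrelated, so the variance of the sum is the sum of the
variances, and each of those is the quadratic form `a² σ₀² + 2ab σ₀₁ + b² σ₁²`; summing the
`n` coupled and `m - n` uncoupled terms gives the formula.
-/

/-- Covariance of two real random variables. -/
noncomputable def covar {Ω : Type*} [MeasurableSpace Ω] (μ : Measure Ω) (X Y : Ω → ℝ) : ℝ :=
  ∫ ω, (X ω - ∫ x, X x ∂μ) * (Y ω - ∫ x, Y x ∂μ) ∂μ

lemma covar_eq_covariance {Ω : Type*} [MeasurableSpace Ω] (μ : Measure Ω) (X Y : Ω → ℝ) :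
    covar μ X Y = cov[X, Y; μ] :=
  rfl

section Uncorrelated

variable {Ω ι : Type*} [MeasurableSpace Ω] {μ : Measure Ω} [IsFiniteMeasure μ]

lemma variance_fun_sum_of_pairwise_covariance_eq_zero {X : ι → Ω → ℝ} {s : Finset ι}
    (hX : ∀ i ∈ s, MemLp (X i) 2 μ) (hcov : (s : Set ι).Pairwise fun i j ↦ cov[X i, X j; μ] = 0) :
    Var[fun ω ↦ ∑ i ∈ s, X i ω; μ] = ∑ i ∈ s, Var[X i; μ] := by
  rw [variance_fun_sum' hX]
  refine Finset.sum_congr rfl fun i hi ↦ ?_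
  rw [Finset.sum_eq_single_of_mem i hi fun j hj hji ↦ hcov hi hj hji.symm,
    covariance_self (hX i hi).aemeasurable]

lemma covariance_const_mul_add_const_mul {X Y X' Y' : Ω → ℝ} (a b a' b' : ℝ)
    (hX : MemLp X 2 μ) (hY : MemLp Y 2 μ) (hX' : MemLp X' 2 μ) (hY' : MemLp Y' 2 μ) :
    cov[fun ω ↦ a * X ω + b * Y ω, fun ω ↦ a' * X' ω + b' * Y' ω; μ]
      = a * a' * cov[X, X'; μ] + a * b' * cov[X, Y'; μ]
        + b * a' * cov[Y, X'; μ] + b * b' * cov[Y, Y'; μ] := by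
  change cov[(fun ω ↦ a * X ω) + (fun ω ↦ b * Y ω),
    (fun ω ↦ a' * X' ω) + (fun ω ↦ b' * Y' ω); μ] = _
  rw [covariance_add_left (hX.const_mul a) (hY.const_mul b)
      ((hX'.const_mul a').add (hY'.const_mul b')),
    covariance_add_right (hX.const_mul a) (hX'.const_mul a') (hY'.const_mul b'),
    covariance_add_right (hY.const_mul b) (hX'.const_mul a') (hY'.const_mul b')]
  simp only [covariance_const_mul_left, covariance_const_mul_right]
  ring

lemma variance_const_mul_add_const_mul {X Y : Ω → ℝ} (a b : ℝ)
    (hX : MemLp X 2 μ) (hY : MemLp Y 2 μ) :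
    Var[fun ω ↦ a * X ω + b * Y ω; μ]
      = a ^ 2 * Var[X; μ] + 2 * a * b * cov[X, Y; μ] + b ^ 2 * Var[Y; μ] := by
  rw [variance_fun_add (hX.const_mul a) (hY.const_mul b), variance_const_mul, variance_const_mul,
    covariance_const_mul_left, covariance_const_mul_right]
  ring

lemma variance_sum_pairs_of_uncorrelated {X Y : ι → Ω → ℝ} {s : Finset ι} (a b : ι → ℝ)
    (hX : ∀ i, MemLp (X i) 2 μ) (hY : ∀ i, MemLp (Y i) 2 μ)
    (hXX : ∀ i j, i ≠ j → cov[X i, X j; μ] = 0) (hYY : ∀ i j, i ≠ j → cov[Y i, Y j; μ] = 0)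
    (hXY : ∀ i j, i ≠ j → cov[X i, Y j; μ] = 0) :
    Var[fun ω ↦ ∑ i ∈ s, (a i * X i ω + b i * Y i ω); μ]
      = ∑ i ∈ s, (a i ^ 2 * Var[X i; μ] + 2 * a i * b i * cov[X i, Y i; μ]
          + b i ^ 2 * Var[Y i; μ]) := by
  have hZ : ∀ i, MemLp (fun ω ↦ a i * X i ω + b i * Y i ω) 2 μ := fun i ↦
    ((hX i).const_mul _).add ((hY i).const_mul _)
  rw [variance_fun_sum_of_pairwise_covariance_eq_zero (fun i _ ↦ hZ i)]
  · exact Finset.sum_congr rfl fun i _ ↦ variance_const_mul_add_const_mul _ _ (hX i) (hY i)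
  · intro i _ j _ hij
    rw [covariance_const_mul_add_const_mul _ _ _ _ (hX i) (hY i) (hX j) (hY j),
      hXX i j hij, hYY i j hij, hXY i j hij, covariance_comm, hXY j i hij.symm]
    ring

end Uncorrelated

lemma Finset.sum_range_ite_lt {M : Type*} [AddCommMonoid M] {n m : ℕ} (h : n ≤ m)
    (f g : ℕ → M) :
    ∑ j ∈ Finset.range m, (if j < n then f j else g j)
      = ∑ j ∈ Finset.range n, f j + ∑ j ∈ Finset.Ico n m, g j := by
  rw [← Finset.sum_range_add_sum_Ico _ h]
  congr 1
  · exact Finset.sum_congr rfl fun j hj ↦ if_pos (Finset.mem_range.mp hj)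
  · exact Finset.sum_congr rfl fun j hj ↦ if_neg (Finset.mem_Ico.mp hj).1.not_gt

noncomputable def bifidelityWeight₀ (n j : ℕ) : ℝ :=
  if j < n then (n : ℝ)⁻¹ else 0

noncomputable def bifidelityWeight₁ (n m : ℕ) (c : ℝ) (j : ℕ) : ℝ :=
  if j < n then c * ((m : ℝ)⁻¹ - (n : ℝ)⁻¹) else c * (m : ℝ)⁻¹

lemma bifidelity_estimator_eq_sum_weights {n m : ℕ} (hnm : n ≤ m) (c : ℝ) (x y : ℕ → ℝ) :
    (n : ℝ)⁻¹ * ∑ j ∈ Finset.range n, x j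
        + c * ((m : ℝ)⁻¹ * ∑ j ∈ Finset.range m, y j - (n : ℝ)⁻¹ * ∑ j ∈ Finset.range n, y j)
      = ∑ j ∈ Finset.range m, (bifidelityWeight₀ n j * x j + bifidelityWeight₁ n m c j * y j) := by
  have hsummand : ∀ j, bifidelityWeight₀ n j * x j + bifidelityWeight₁ n m c j * y j
      = if j < n then (n : ℝ)⁻¹ * x j + c * ((m : ℝ)⁻¹ - (n : ℝ)⁻¹) * y j
        else c * (m : ℝ)⁻¹ * y j := by
    intro j
    split_ifs with hj <;> simp [bifidelityWeight₀, bifidelityWeight₁, hj]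
  simp only [hsummand, Finset.sum_range_ite_lt hnm, ← Finset.sum_range_add_sum_Ico _ hnm,
    Finset.sum_add_distrib, ← Finset.mul_sum]
  ring

lemma sum_bifidelityWeight_quadratic {n m : ℕ} (hn : 0 < n) (hnm : n < m) (c : ℝ)
    {σ0sq σ1sq σ01 : ℝ} {v₀ v₁ v₀₁ : ℕ → ℝ} (hv₀ : ∀ j < n, v₀ j = σ0sq)
    (hv₁ : ∀ j < m, v₁ j = σ1sq) (hv₀₁ : ∀ j < n, v₀₁ j = σ01) :
    ∑ j ∈ Finset.range m, (bifidelityWeight₀ n j ^ 2 * v₀ j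
        + 2 * bifidelityWeight₀ n j * bifidelityWeight₁ n m c j * v₀₁ j
        + bifidelityWeight₁ n m c j ^ 2 * v₁ j)
      = σ0sq / n + (1 / n - 1 / m) * (c ^ 2 * σ1sq - 2 * c * σ01) := by
  have hsummand : ∀ j ∈ Finset.range m, bifidelityWeight₀ n j ^ 2 * v₀ j
        + 2 * bifidelityWeight₀ n j * bifidelityWeight₁ n m c j * v₀₁ j
        + bifidelityWeight₁ n m c j ^ 2 * v₁ j
      = if j < n then (n : ℝ)⁻¹ ^ 2 * σ0sq + 2 * (n : ℝ)⁻¹ * (c * ((m : ℝ)⁻¹ - (n : ℝ)⁻¹)) * σ01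
          + (c * ((m : ℝ)⁻¹ - (n : ℝ)⁻¹)) ^ 2 * σ1sq
        else (c * (m : ℝ)⁻¹) ^ 2 * σ1sq := by
    intro j hj
    have hjm := Finset.mem_range.mp hj
    split_ifs with hjn
    · simp [bifidelityWeight₀, bifidelityWeight₁, hjn, hv₀ j hjn, hv₁ j hjm, hv₀₁ j hjn]
    · simp [bifidelityWeight₀, bifidelityWeight₁, hjn, hv₁ j hjm]
  rw [Finset.sum_congr rfl hsummand, Finset.sum_range_ite_lt hnm.le]
  simp only [Finset.sum_const, Finset.card_range, Nat.card_Ico, nsmul_eq_mul,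
    Nat.cast_sub hnm.le]
  have hn0 : (n : ℝ) ≠ 0 := Nat.cast_ne_zero.mpr hn.ne'
  have hm0 : (m : ℝ) ≠ 0 := Nat.cast_ne_zero.mpr (hn.trans hnm).ne'
  field_simp
  ring

/-- variance of the bi-fidelity (two-level) Monte Carlo estimator with
common random numbers on the first `n` samples. -/
theorem bifidelity_variance
    {Ω : Type*} [MeasurableSpace Ω] (μ : Measure Ω) [IsProbabilityMeasure μ]
    (n m : ℕ) (hn : 0 < n) (hnm : n < m)
    (F0 F1 : ℕ → Ω → ℝ) (c σ0sq σ1sq σ01 : ℝ)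
    (hL0 : ∀ j, MemLp (F0 j) 2 μ) (hL1 : ∀ j, MemLp (F1 j) 2 μ)
    (hv0 : ∀ j < n, variance (F0 j) μ = σ0sq)
    (hv1 : ∀ j < m, variance (F1 j) μ = σ1sq)
    (hcov : ∀ j < n, covar μ (F0 j) (F1 j) = σ01)
    (hind00 : ∀ j k, j ≠ k → covar μ (F0 j) (F0 k) = 0)
    (hind11 : ∀ j k, j ≠ k → covar μ (F1 j) (F1 k) = 0)
    (hind01 : ∀ j k, j ≠ k → covar μ (F0 j) (F1 k) = 0) :
    variance (fun ω =>
        (n : ℝ)⁻¹ * ∑ j ∈ Finset.range n, F0 j ω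
          + c * ((m : ℝ)⁻¹ * ∑ j ∈ Finset.range m, F1 j ω
              - (n : ℝ)⁻¹ * ∑ j ∈ Finset.range n, F1 j ω)) μ
      = σ0sq / n + (1 / n - 1 / m) * (c ^ 2 * σ1sq - 2 * c * σ01) := by
  simp only [covar_eq_covariance] at hcov hind00 hind11 hind01
  have hestimator : (fun ω ↦ (n : ℝ)⁻¹ * ∑ j ∈ Finset.range n, F0 j ω
      + c * ((m : ℝ)⁻¹ * ∑ j ∈ Finset.range m, F1 j ω
        - (n : ℝ)⁻¹ * ∑ j ∈ Finset.range n, F1 j ω))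
      = fun ω ↦ ∑ j ∈ Finset.range m,
          (bifidelityWeight₀ n j * F0 j ω + bifidelityWeight₁ n m c j * F1 j ω) :=
    funext fun ω ↦ bifidelity_estimator_eq_sum_weights hnm.le c (F0 · ω) (F1 · ω)
  rw [hestimator, variance_sum_pairs_of_uncorrelated _ _ hL0 hL1 hind00 hind11 hind01]
  exact sum_bifidelityWeight_quadratic hn hnm c hv0 hv1 hcov
end

section
/- In the feasible region of the MFMC sample-allocation problem, any feasible allocation satisfies n^0 \le n^1 \le ... \le n^q and achieves estimated variance at most \kappa^2\Delta_k^4/\lambda_k; moreover if the estimated covariances satisfy 2c^i\hat\sigma_{0,i} \ge (c^i)^2\hat\sigma_i^2 for all i, then the plain MC sample size n_p = \lceil \hat\sigma_0^2\lambda_k/(\kappa^2\Delta_k^4) \rceil with allocation (n_p, n_p, ..., n_p) and coefficients c = 0 is feasible for the problem, so the optimal MFMC objective value is at most w^0 n_p + \sum_{i \ge 1} w^i n_p. -/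
/-- Estimated variance of the MFMC estimator for a (real-relaxed) sample allocation `n`
and coefficients `c`. -/
noncomputable def VhatMFMC (q : ℕ) (σsq σ0i : ℕ → ℝ) (n c : ℕ → ℝ) : ℝ :=
  σsq 0 / n 0 + ∑ i ∈ Finset.Icc 1 q,
    (1 / n (i - 1) - 1 / n i) * ((c i) ^ 2 * σsq i - 2 * c i * σ0i i)

/-- Feasibility for the MFMC sample-allocation problem. -/
def FeasibleMFMC (q : ℕ) (σsq σ0i ntil : ℕ → ℝ) (κ Δ lam : ℝ) (n c : ℕ → ℝ) : Prop :=
  VhatMFMC q σsq σ0i n c ≤ κ ^ 2 * Δ ^ 4 / lam ∧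
  (∀ i, i < q → n i ≤ n (i + 1)) ∧
  (∀ i, i ≤ q → ntil i ≤ n i)

lemma ceil_div_bound (s K lam : ℝ) (hs : 0 ≤ s) (hK : 0 < K) (hlam : 0 < lam) :
    s / (⌈s * lam / K⌉₊ : ℝ) ≤ K / lam := by
  rcases eq_or_lt_of_le hs with h | h
  · simp [← h]
    positivity
  · have ht : 0 < s * lam / K := by positivity
    have hle : s * lam / K ≤ (⌈s * lam / K⌉₊ : ℝ) := Nat.le_ceil _
    have hn : 0 < (⌈s * lam / K⌉₊ : ℝ) := lt_of_lt_of_le ht hle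
    have h1 : s / (⌈s * lam / K⌉₊ : ℝ) ≤ s / (s * lam / K) :=
      div_le_div_of_nonneg_left hs ht hle
    have h2 : s / (s * lam / K) = K / lam := by
      field_simp
    linarith

/-- every feasible allocation is monotone and meets the variance bound;
and if `2cⁱσ̂₀ᵢ ≥ (cⁱ)²σ̂ᵢ²` for all `i`, then the constant allocation at the plain MC
sample size `n_p = ⌈σ̂₀²λ/(κ²Δ⁴)⌉` with zero coefficients is feasible, so the optimal
MFMC objective value is at most `∑ᵢ wⁱ n_p`. -/
theorem mfmc_allocation_feasibility
    (q : ℕ) (w σsq σ0i ntil : ℕ → ℝ) (κ Δ lam : ℝ) (c : ℕ → ℝ)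
    (hw : ∀ i, 0 < w i) (hσ : ∀ i, 0 ≤ σsq i)
    (hκ : 0 < κ) (hΔ : 0 < Δ) (hlam : 0 < lam)
    (hcv : ∀ i, 1 ≤ i → i ≤ q → 2 * c i * σ0i i ≥ (c i) ^ 2 * σsq i)
    (hlb : ∀ i, i ≤ q → ntil i ≤ (⌈σsq 0 * lam / (κ ^ 2 * Δ ^ 4)⌉₊ : ℝ)) :
    (∀ n c' : ℕ → ℝ, FeasibleMFMC q σsq σ0i ntil κ Δ lam n c' →
        (∀ i, i < q → n i ≤ n (i + 1)) ∧ VhatMFMC q σsq σ0i n c' ≤ κ ^ 2 * Δ ^ 4 / lam) ∧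
    FeasibleMFMC q σsq σ0i ntil κ Δ lam
      (fun _ => (⌈σsq 0 * lam / (κ ^ 2 * Δ ^ 4)⌉₊ : ℝ)) (fun _ => 0) ∧
    sInf {C : ℝ | ∃ n c' : ℕ → ℝ, FeasibleMFMC q σsq σ0i ntil κ Δ lam n c' ∧
        C = ∑ i ∈ Finset.Icc 0 q, w i * n i}
      ≤ ∑ i ∈ Finset.Icc 0 q, w i * (⌈σsq 0 * lam / (κ ^ 2 * Δ ^ 4)⌉₊ : ℝ) := by
  have hK : 0 < κ ^ 2 * Δ ^ 4 := by positivity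
  have hfeas : FeasibleMFMC q σsq σ0i ntil κ Δ lam
      (fun _ => (⌈σsq 0 * lam / (κ ^ 2 * Δ ^ 4)⌉₊ : ℝ)) (fun _ => 0) := by
    refine ⟨?_, fun i _ => le_refl _, fun i hi => hlb i hi⟩
    have : VhatMFMC q σsq σ0i (fun _ => (⌈σsq 0 * lam / (κ ^ 2 * Δ ^ 4)⌉₊ : ℝ))
        (fun _ => 0) = σsq 0 / (⌈σsq 0 * lam / (κ ^ 2 * Δ ^ 4)⌉₊ : ℝ) := by
      simp [VhatMFMC]
    rw [this]
    exact ceil_div_bound (σsq 0) (κ ^ 2 * Δ ^ 4) lam (hσ 0) hK hlam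
  refine ⟨fun n c' h => ⟨h.2.1, h.1⟩, hfeas, ?_⟩
  apply csInf_le
  · refine ⟨∑ i ∈ Finset.Icc 0 q, w i * ntil i, ?_⟩
    rintro x ⟨n, c', hf, rfl⟩
    apply Finset.sum_le_sum
    intro i hi
    exact mul_le_mul_of_nonneg_left (hf.2.2 i (Finset.mem_Icc.mp hi).2) (hw i).le
  · exact ⟨_, _, hfeas, rfl⟩
end

section
/- In the continuous relaxation of the two-level MFMC allocation problem with variance constraint active, the cost-optimal ratio of low-to-high-fidelity samples is m/n = \sqrt{(w^0/w^1)\cdot \rho^2/(1-\rho^2)}, provided 0 < \rho^2 < 1 and w^0, w^1 > 0. -/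
/-- in the continuous relaxation of the two-level MFMC allocation problem
with active variance constraint, a cost-minimizing allocation satisfies
`m/n = √(w⁰ρ²/(w¹(1-ρ²)))`. -/
theorem mfmc_optimal_sample_ratio
    (w0 w1 σ0 V ρ : ℝ) (hw0 : 0 < w0) (hw1 : 0 < w1) (hσ0 : 0 < σ0) (hV : 0 < V)
    (hρ : 0 < ρ) (hρ1 : ρ < 1)
    (n m : ℝ) (hn : 0 < n) (hm : 0 < m)
    (hcon : σ0 ^ 2 / n * (1 - (1 - n / m) * ρ ^ 2) = V)
    (hopt : ∀ n' m' : ℝ, 0 < n' → 0 < m' →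
        σ0 ^ 2 / n' * (1 - (1 - n' / m') * ρ ^ 2) = V →
        w0 * n + w1 * m ≤ w0 * n' + w1 * m') :
    m / n = Real.sqrt (w0 * ρ ^ 2 / (w1 * (1 - ρ ^ 2))) := by
  have hρ2 : ρ ^ 2 < 1 := by nlinarith
  obtain ⟨a, ha_def⟩ : ∃ a : ℝ, a = σ0 ^ 2 * (1 - ρ ^ 2) := ⟨_, rfl⟩
  obtain ⟨b, hb_def⟩ : ∃ b : ℝ, b = σ0 ^ 2 * ρ ^ 2 := ⟨_, rfl⟩
  have ha : 0 < a := by rw [ha_def]; have : 0 < 1 - ρ ^ 2 := by linarith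
                        positivity
  have hb : 0 < b := by rw [hb_def]; positivity
  obtain ⟨s, hs_def⟩ : ∃ s : ℝ, s = Real.sqrt (w0 * b / (w1 * a)) := ⟨_, rfl⟩
  have hs : 0 < s := hs_def ▸ Real.sqrt_pos.mpr (by positivity)
  have hs2 : w1 * a * s ^ 2 = w0 * b := by
    rw [hs_def, Real.sq_sqrt (by positivity)]
    field_simp
  have hid : ∀ x y : ℝ, x ≠ 0 → y ≠ 0 →
      σ0 ^ 2 / x * (1 - (1 - x / y) * ρ ^ 2) = a / x + b / y := by
    intro x y hx hy
    rw [ha_def, hb_def]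
    field_simp
    ring
  have hcon' : a / n + b / m = V := by rw [← hid n m hn.ne' hm.ne', hcon]
  obtain ⟨N, hN_def⟩ : ∃ N : ℝ, N = (a + b / s) / V := ⟨_, rfl⟩
  have hN : 0 < N := by rw [hN_def]; positivity
  have hM : 0 < s * N := by positivity
  have hfeas : σ0 ^ 2 / N * (1 - (1 - N / (s * N)) * ρ ^ 2) = V := by
    rw [hid N (s * N) hN.ne' hM.ne', hN_def]
    field_simp
  have hle := hopt N (s * N) hN hM hfeas
  have hgoal_eq : w0 * ρ ^ 2 / (w1 * (1 - ρ ^ 2)) = w0 * b / (w1 * a) := by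
    rw [ha_def, hb_def]
    have h1 : (1 : ℝ) - ρ ^ 2 ≠ 0 := by nlinarith
    field_simp
  rw [hgoal_eq, ← hs_def]
  have h1 : (w0 * n + w1 * m) * V ≤ (w0 * N + w1 * (s * N)) * V :=
    mul_le_mul_of_nonneg_right hle hV.le
  have hnV : n * V = a + b * (n / m) := by
    rw [← hcon']; field_simp
  have hmV : m * V = a * (m / n) + b := by
    rw [← hcon']; field_simp
  have hNV : N * V = a + b / s := by
    rw [hN_def]; field_simp
  have key' : w0 * b * (n / m) + w1 * a * (m / n) ≤ 2 * w1 * a * s := by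
    have e1 : (w0 * n + w1 * m) * V
        = w0 * a + w1 * b + w0 * b * (n / m) + w1 * a * (m / n) := by
      have h : (w0 * n + w1 * m) * V = w0 * (n * V) + w1 * (m * V) := by ring
      rw [h, hnV, hmV]; ring
    have e2 : (w0 * N + w1 * (s * N)) * V
        = w0 * a + w1 * b + 2 * w1 * a * s := by
      have h : (w0 * N + w1 * (s * N)) * V = w0 * (N * V) + w1 * s * (N * V) := by ring
      rw [h, hNV]
      field_simp
      linear_combination -hs2
    rw [e1, e2] at h1
    linarith
  have hinv : (n / m) * (m / n) = 1 := by field_simp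
  have ht : 0 < m / n := by positivity
  have key : w0 * b + w1 * a * (m / n) ^ 2 ≤ 2 * w1 * a * s * (m / n) := by
    have e : (w0 * b * (n / m) + w1 * a * (m / n)) * (m / n)
        = w0 * b + w1 * a * (m / n) ^ 2 := by
      linear_combination (w0 * b) * hinv
    calc w0 * b + w1 * a * (m / n) ^ 2
        = (w0 * b * (n / m) + w1 * a * (m / n)) * (m / n) := e.symm
      _ ≤ (2 * w1 * a * s) * (m / n) := mul_le_mul_of_nonneg_right key' ht.le
      _ = 2 * w1 * a * s * (m / n) := by ring
  have expand : w1 * a * (m / n - s) ^ 2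
      = (w1 * a * (m / n) ^ 2 - 2 * w1 * a * s * (m / n)) + w1 * a * s ^ 2 := by ring
  have hkey2 : w1 * a * (m / n - s) ^ 2 ≤ 0 := by
    rw [expand]; linarith [key, hs2]
  have hx : (m / n - s) ^ 2 ≤ 0 :=
    le_of_mul_le_mul_left
      (by linarith [hkey2] : (w1 * a) * ((m / n - s) ^ 2) ≤ (w1 * a) * 0)
      (mul_pos hw1 ha)
  have h0 : (m / n - s) ^ 2 = 0 := le_antisymm hx (sq_nonneg _)
  have h2 := pow_eq_zero_iff (n := 2) (by norm_num) |>.mp h0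
  linarith [sub_eq_zero.mp h2]
end
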